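/- Every subloop N of T_L is normal: for all x, y ∈ T_L one has x·N = N·x, (x·N)·y = x·(N·y), and N·(x·y) = (N·x)·y, where for subsets the product is taken elementwise (e.g. x·N = {x·n : n ∈ N}). -/

import Mathlib

/-- Iterated Cayley–Dickson doubling starting from `ℝ`. -/
def CD : ℕ → Type
  | 0 => ℝ
  | n + 1 => CD n × CD n

instance cdAddCommGroup : ∀ n, AddCommGroup (CD n)
  | 0 => inferInstanceAs (AddCommGroup ℝ)
  | n + 1 => letI := cdAddCommGroup n; inferInstanceAs (AddCommGroup (CD n × CD n))

noncomputable instance cdModule : ∀ n, Module ℝ (CD n)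
  | 0 => inferInstanceAs (Module ℝ ℝ)
  | n + 1 => letI := cdModule n; inferInstanceAs (Module ℝ (CD n × CD n))

/-- Cayley–Dickson conjugation, starting from the identity on `ℝ`. -/
def cdConj : ∀ n, CD n → CD n
  | 0, x => x
  | n + 1, x => (cdConj n x.1, -x.2)

/-- Cayley–Dickson multiplication: `(a,b)(c,d) = (ac − d b̄, ā d + c b)`. -/
def cdMul : ∀ n, CD n → CD n → CD n
  | 0, x, y => @Mul.mul ℝ _ x y
  | n + 1, x, y =>
      (cdMul n x.1 y.1 - cdMul n y.2 (cdConj n x.2),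
       cdMul n (cdConj n x.1) y.2 + cdMul n y.1 x.2)

instance cdMulInst (n : ℕ) : Mul (CD n) := ⟨cdMul n⟩

instance cdOne : ∀ n, One (CD n)
  | 0 => ⟨(1 : ℝ)⟩
  | n + 1 => letI := cdOne n; ⟨((1 : CD n), 0)⟩

/-- The standard basis elements: under a doubling step `A → A × A`, a basis element
`e k` of `A` gives `e k = (e k, 0)` and `e (k + dim A) = (0, e k)`. -/
def cdE : ∀ n, ℕ → CD n
  | 0, _ => (1 : ℝ)
  | n + 1, k => if k < 2 ^ n then (cdE n k, 0) else (0, cdE n (k - 2 ^ n))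

/-- The trigintaduonions: the 32-dimensional real Cayley–Dickson algebra. -/
abbrev TT := CD 5

/-- The 32 standard basis elements `e 0 = 1, e 1, …, e 31` of `𝕋`. -/
def e (i : ℕ) : TT := cdE 5 i

/-- The trigintaduonion loop `T_L = {±e 0, ±e 1, …, ±e 31}`. -/
def TL : Set TT := {x | ∃ i < 32, x = e i ∨ x = -e i}

/-- A subloop of `T_L`: a nonempty subset of `T_L` closed under multiplication. -/
def IsSubloop (N : Set TT) : Prop :=
  N ⊆ TL ∧ N.Nonempty ∧ ∀ x ∈ N, ∀ y ∈ N, x * y ∈ N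

/-- Two subsets of `T_L` are isomorphic (as loops) if some bijection between them
preserves multiplication. -/
def LoopIso (A B : Set TT) : Prop :=
  ∃ f : TT → TT, Set.BijOn f A B ∧ ∀ x ∈ A, ∀ y ∈ A, f (x * y) = f x * f y

/-!
Up to sign, the basis elements multiply like the group `(ℤ/2)⁵`: `eᵢ eⱼ = ±e_{i xor j}`, which
follows by induction along the Cayley–Dickson doubling. Hence any two elements of `T_L` commute up
to sign and any three associate up to sign. A subloop other than `{1}` contains some `m ≠ ±1`,
whose square is `-1`; so it contains `-1` and is closed under negation, and every sign
discrepancy in the three set equalities is absorbed by replacing `n ∈ N` with `-n`.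
-/

def EqUpToSign {α : Type*} [Neg α] (x y : α) : Prop := x = y ∨ x = -y

namespace EqUpToSign

variable {α β : Type*}

theorem refl [Neg α] (x : α) : EqUpToSign x x := Or.inl rfl

theorem neg_left [InvolutiveNeg α] {x y : α} (h : EqUpToSign x y) : EqUpToSign (-x) y :=
  h.elim (fun h => Or.inr (h ▸ rfl)) (fun h => Or.inl (by rw [h, neg_neg]))

theorem symm [InvolutiveNeg α] {x y : α} (h : EqUpToSign x y) : EqUpToSign y x :=
  h.elim (fun h => Or.inl h.symm) (fun h => Or.inr (by rw [h, neg_neg]))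

theorem trans [InvolutiveNeg α] {x y z : α} (hxy : EqUpToSign x y) (hyz : EqUpToSign y z) :
    EqUpToSign x z := by
  rcases hxy with rfl | rfl
  · exact hyz
  · exact hyz.neg_left

theorem map [Neg α] [Neg β] {f : α → β} (hf : f.Odd) {x y : α}
    (h : EqUpToSign x y) : EqUpToSign (f x) (f y) :=
  h.elim (fun h => Or.inl (h ▸ rfl)) (fun h => Or.inr (h ▸ hf y))

theorem mul [Mul α] [HasDistribNeg α] {a a' b b' : α} (ha : EqUpToSign a a')
    (hb : EqUpToSign b b') : EqUpToSign (a * b) (a' * b') :=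
  (ha.map (f := (· * b)) (fun x => neg_mul x b)).trans (hb.map (fun x => mul_neg a' x))

end EqUpToSign

theorem Set.image_subset_image_of_eqUpToSign {α β : Type*} [Neg α] [InvolutiveNeg β]
    {N : Set α} (hN : ∀ x ∈ N, -x ∈ N) {f g : α → β} (hg : g.Odd)
    (hfg : ∀ x ∈ N, EqUpToSign (f x) (g x)) : f '' N ⊆ g '' N := by
  rintro _ ⟨x, hx, rfl⟩
  rcases hfg x hx with h | h
  · exact ⟨x, hx, h.symm⟩
  · exact ⟨-x, hN x hx, by rw [hg, h]⟩

theorem Set.image_eq_image_of_eqUpToSign {α β : Type*} [Neg α] [InvolutiveNeg β]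
    {N : Set α} (hN : ∀ x ∈ N, -x ∈ N) {f g : α → β} (hf : f.Odd) (hg : g.Odd)
    (hfg : ∀ x ∈ N, EqUpToSign (f x) (g x)) : f '' N = g '' N :=
  (image_subset_image_of_eqUpToSign hN hg hfg).antisymm
    (image_subset_image_of_eqUpToSign hN hf fun x hx => (hfg x hx).symm)

theorem Nat.two_pow_add_eq_xor_of_lt {n k : ℕ} (h : k < 2 ^ n) : 2 ^ n + k = 2 ^ n ^^^ k := by
  apply Nat.eq_of_testBit_eq
  intro j
  rw [Nat.testBit_xor, Nat.testBit_two_pow]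
  rcases lt_trichotomy j n with hj | rfl | hj
  · rw [Nat.testBit_two_pow_add_gt hj]; simp [hj.ne']
  · rw [Nat.testBit_two_pow_add_eq, Nat.testBit_lt_two_pow h]; simp
  · have : 2 ^ (n + 1) ≤ 2 ^ j := Nat.pow_le_pow_right two_pos hj
    rw [Nat.testBit_lt_two_pow (by omega), Nat.testBit_lt_two_pow (by omega)]
    simp [hj.ne]

theorem Nat.xor_two_pow_add_of_lt {n i j : ℕ} (hi : i < 2 ^ n) (hj : j < 2 ^ n) :
    i ^^^ (2 ^ n + j) = 2 ^ n + (i ^^^ j) := by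
  rw [two_pow_add_eq_xor_of_lt hj, two_pow_add_eq_xor_of_lt (xor_lt_two_pow hi hj)]
  ac_rfl

theorem Nat.two_pow_add_xor_two_pow_add_of_lt {n i j : ℕ} (hi : i < 2 ^ n) (hj : j < 2 ^ n) :
    (2 ^ n + i) ^^^ (2 ^ n + j) = i ^^^ j := by
  rw [two_pow_add_eq_xor_of_lt hi, two_pow_add_eq_xor_of_lt hj, Nat.xor_comm (2 ^ n) i,
    Nat.xor_assoc, ← Nat.xor_assoc (2 ^ n), Nat.xor_self, Nat.zero_xor]

theorem Nat.lt_two_pow_or_eq_two_pow_add {n i : ℕ} (h : i < 2 ^ (n + 1)) :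
    i < 2 ^ n ∨ ∃ j < 2 ^ n, i = 2 ^ n + j := by
  rcases lt_or_ge i (2 ^ n) with hi | hi
  · exact Or.inl hi
  · exact Or.inr ⟨i - 2 ^ n, by rw [pow_succ] at h; omega, by omega⟩

namespace CD

/-- `CD (n + 1)` unfolds to `CD n × CD n`, whose instances (componentwise product) are not the
Cayley–Dickson ones; `mk` keeps pairs typed as `CD (n + 1)`. -/
def mk {n : ℕ} (a b : CD n) : CD (n + 1) := (a, b)

variable {n : ℕ}

theorem eta (x : CD (n + 1)) : mk x.1 x.2 = x := rfl

theorem mk_inj {a b c d : CD n} : mk a b = mk c d ↔ a = c ∧ b = d :=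
  Prod.mk.injEq a b c d ▸ Iff.rfl

theorem mk_add_mk (a b c d : CD n) : mk a b + mk c d = mk (a + c) (b + d) := rfl

theorem neg_mk (a b : CD n) : -mk a b = mk (-a) (-b) := rfl

theorem zero_eq_mk : (0 : CD (n + 1)) = mk 0 0 := rfl

theorem one_eq_mk : (1 : CD (n + 1)) = mk 1 0 := rfl

theorem mk_mul_mk (a b c d : CD n) :
    mk a b * mk c d = mk (a * c - d * cdConj n b) (cdConj n a * d + c * b) := rfl

theorem conj_mk (a b : CD n) : cdConj (n + 1) (mk a b) = mk (cdConj n a) (-b) := rfl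

end CD

theorem cdConj_add : ∀ n (x y : CD n), cdConj n (x + y) = cdConj n x + cdConj n y
  | 0, _, _ => rfl
  | n + 1, x, y => by
      rw [← CD.eta x, ← CD.eta y, CD.mk_add_mk, CD.conj_mk, CD.conj_mk, CD.conj_mk,
        CD.mk_add_mk, cdConj_add n, neg_add]

theorem cdConj_zero : ∀ n, cdConj n 0 = 0
  | 0 => rfl
  | n + 1 => by rw [CD.zero_eq_mk, CD.conj_mk, cdConj_zero n, neg_zero]

theorem cdConj_one : ∀ n, cdConj n 1 = 1
  | 0 => rfl
  | n + 1 => by rw [CD.one_eq_mk, CD.conj_mk, cdConj_one n, neg_zero]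

namespace CD

theorem mul_add_and_add_mul : ∀ n (x y z : CD n),
    x * (y + z) = x * y + x * z ∧ (x + y) * z = x * z + y * z
  | 0, x, y, z => ⟨mul_add (R := ℝ) x y z, add_mul (R := ℝ) x y z⟩
  | n + 1, x, y, z => by
      rw [← eta x, ← eta y, ← eta z]
      simp only [mk_add_mk, mk_mul_mk, cdConj_add, (mul_add_and_add_mul n _ _ _).1,
        (mul_add_and_add_mul n _ _ _).2, mk_inj]
      refine ⟨⟨?_, ?_⟩, ?_, ?_⟩ <;> abel

instance (n : ℕ) : NonUnitalNonAssocRing (CD n) where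
  __ := cdAddCommGroup n
  __ := cdMulInst n
  left_distrib x y z := (mul_add_and_add_mul n x y z).1
  right_distrib x y z := (mul_add_and_add_mul n x y z).2
  zero_mul x := by
    have := (mul_add_and_add_mul n 0 0 x).2
    rwa [add_zero, left_eq_add] at this
  mul_zero x := by
    have := (mul_add_and_add_mul n x 0 0).1
    rwa [add_zero, left_eq_add] at this

theorem one_mul_and_mul_one : ∀ n (x : CD n), 1 * x = x ∧ x * 1 = x
  | 0, x => ⟨one_mul (M := ℝ) x, mul_one (M := ℝ) x⟩
  | n + 1, x => by
      rw [← eta x]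
      simp only [one_eq_mk, mk_mul_mk, cdConj_one, cdConj_zero, (one_mul_and_mul_one n _).1,
        (one_mul_and_mul_one n _).2, mul_zero, zero_mul, sub_zero, add_zero, zero_add, and_self]

instance (n : ℕ) : NonAssocRing (CD n) where
  __ := (inferInstance : NonUnitalNonAssocRing (CD n))
  __ := cdOne n
  one_mul x := (one_mul_and_mul_one n x).1
  mul_one x := (one_mul_and_mul_one n x).2

theorem neg_mk_zero {n : ℕ} (x : CD n) : -mk x 0 = mk (-x) 0 := by rw [neg_mk, neg_zero]

theorem neg_zero_mk {n : ℕ} (x : CD n) : -mk 0 x = mk 0 (-x) := by rw [neg_mk, neg_zero]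

end CD

theorem EqUpToSign.mk_zero {n : ℕ} {x y : CD n} (h : EqUpToSign x y) :
    EqUpToSign (CD.mk x 0) (CD.mk y 0) :=
  h.map (f := (CD.mk · 0)) fun x => (CD.neg_mk_zero x).symm

theorem EqUpToSign.zero_mk {n : ℕ} {x y : CD n} (h : EqUpToSign x y) :
    EqUpToSign (CD.mk 0 x) (CD.mk 0 y) :=
  h.map (f := CD.mk 0) fun x => (CD.neg_zero_mk x).symm

theorem cdE_zero : ∀ n, cdE n 0 = 1
  | 0 => rfl
  | n + 1 => (if_pos (Nat.two_pow_pos n)).trans (by rw [cdE_zero n]; rfl)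

theorem cdE_succ_of_lt {n k : ℕ} (h : k < 2 ^ n) : cdE (n + 1) k = CD.mk (cdE n k) 0 :=
  if_pos h

theorem cdE_succ_two_pow_add (n k : ℕ) : cdE (n + 1) (2 ^ n + k) = CD.mk 0 (cdE n k) :=
  (if_neg (Nat.not_lt.2 (Nat.le_add_right _ _))).trans (by rw [Nat.add_sub_cancel_left]; rfl)

theorem cdConj_cdE_of_ne_zero : ∀ n, ∀ i < 2 ^ n, i ≠ 0 → cdConj n (cdE n i) = -cdE n i
  | 0, i, hi, h0 => by omega
  | n + 1, i, hi, h0 => by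
      rcases Nat.lt_two_pow_or_eq_two_pow_add hi with hi | ⟨i, hi', rfl⟩
      · rw [cdE_succ_of_lt hi, CD.conj_mk, cdConj_cdE_of_ne_zero n i hi h0, CD.neg_mk]
      · rw [cdE_succ_two_pow_add n i, CD.conj_mk, cdConj_zero, CD.neg_mk, neg_zero]

theorem eqUpToSign_cdConj_cdE {n i : ℕ} (hi : i < 2 ^ n) :
    EqUpToSign (cdConj n (cdE n i)) (cdE n i) := by
  rcases eq_or_ne i 0 with rfl | h0
  · rw [cdE_zero, cdConj_one]
    exact .refl _
  · exact Or.inr (cdConj_cdE_of_ne_zero n i hi h0)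

theorem cdE_mul_self : ∀ n, ∀ i < 2 ^ n, i ≠ 0 → cdE n i * cdE n i = -1
  | 0, i, hi, h0 => by omega
  | n + 1, i, hi, h0 => by
      rcases Nat.lt_two_pow_or_eq_two_pow_add hi with hi | ⟨i, hi', rfl⟩
      · rw [cdE_succ_of_lt hi, CD.mk_mul_mk, cdE_mul_self n i hi h0, CD.one_eq_mk, CD.neg_mk]
        simp only [zero_mul, sub_zero, mul_zero, add_zero, neg_zero]
      · have hconj : cdE n i * cdConj n (cdE n i) = 1 := by
          rcases eq_or_ne i 0 with rfl | h0
          · rw [cdE_zero, cdConj_one, mul_one]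
          · rw [cdConj_cdE_of_ne_zero n i hi' h0, mul_neg, cdE_mul_self n i hi' h0, neg_neg]
        rw [cdE_succ_two_pow_add n i, CD.mk_mul_mk, hconj, CD.one_eq_mk, CD.neg_mk]
        simp only [mul_zero, zero_sub, cdConj_zero, zero_mul, add_zero, neg_zero]

theorem cdE_mul_cdE : ∀ n, ∀ i < 2 ^ n, ∀ j < 2 ^ n,
    EqUpToSign (cdE n i * cdE n j) (cdE n (i ^^^ j))
  | 0, i, hi, j, hj => by
      obtain rfl : i = 0 := by omega
      obtain rfl : j = 0 := by omega
      rw [Nat.xor_self, cdE_zero, mul_one]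
      exact .refl _
  | n + 1, i, hi, j, hj => by
      rcases Nat.lt_two_pow_or_eq_two_pow_add hi with hi | ⟨i, hi', rfl⟩ <;>
        rcases Nat.lt_two_pow_or_eq_two_pow_add hj with hj | ⟨j, hj', rfl⟩
      · rw [cdE_succ_of_lt hi, cdE_succ_of_lt hj, cdE_succ_of_lt (Nat.xor_lt_two_pow hi hj),
          CD.mk_mul_mk]
        simp only [cdConj_zero, mul_zero, sub_zero, add_zero]
        exact (cdE_mul_cdE n i hi j hj).mk_zero
      · rw [cdE_succ_of_lt hi, cdE_succ_two_pow_add, Nat.xor_two_pow_add_of_lt hi hj',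
          cdE_succ_two_pow_add, CD.mk_mul_mk]
        simp only [cdConj_zero, mul_zero, sub_zero, add_zero]
        exact (((eqUpToSign_cdConj_cdE hi).mul (.refl _)).trans
          (cdE_mul_cdE n i hi j hj')).zero_mk
      · rw [cdE_succ_of_lt hj, cdE_succ_two_pow_add, Nat.xor_comm,
          Nat.xor_two_pow_add_of_lt hj hi', cdE_succ_two_pow_add, CD.mk_mul_mk]
        simp only [cdConj_zero, mul_zero, zero_mul, sub_zero, zero_add]
        exact (cdE_mul_cdE n j hj i hi').zero_mk
      · rw [cdE_succ_two_pow_add, cdE_succ_two_pow_add,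
          Nat.two_pow_add_xor_two_pow_add_of_lt hi' hj', Nat.xor_comm,
          cdE_succ_of_lt (Nat.xor_lt_two_pow hj' hi'), CD.mk_mul_mk]
        simp only [cdConj_zero, mul_zero, zero_mul, zero_sub, add_zero, ← CD.neg_mk_zero]
        exact (((EqUpToSign.refl _).mul (eqUpToSign_cdConj_cdE hi')).trans
          (cdE_mul_cdE n j hj' i hi')).mk_zero.neg_left

def cdLoop (n : ℕ) : Set (CD n) := {x | ∃ i < 2 ^ n, EqUpToSign x (cdE n i)}

theorem TL_eq_cdLoop : TL = cdLoop 5 := rfl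

namespace cdLoop

variable {n : ℕ} {x y z : CD n}

theorem eqUpToSign_mul {i j : ℕ} (hi : i < 2 ^ n) (hj : j < 2 ^ n) (hx : EqUpToSign x (cdE n i))
    (hy : EqUpToSign y (cdE n j)) : EqUpToSign (x * y) (cdE n (i ^^^ j)) :=
  (hx.mul hy).trans (cdE_mul_cdE n i hi j hj)

theorem eqUpToSign_mul_comm (hx : x ∈ cdLoop n) (hy : y ∈ cdLoop n) :
    EqUpToSign (x * y) (y * x) := by
  obtain ⟨i, hi, hxi⟩ := hx
  obtain ⟨j, hj, hyj⟩ := hy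
  have hyx := eqUpToSign_mul hj hi hyj hxi
  rw [Nat.xor_comm] at hyx
  exact (eqUpToSign_mul hi hj hxi hyj).trans hyx.symm

theorem eqUpToSign_mul_assoc (hx : x ∈ cdLoop n) (hy : y ∈ cdLoop n) (hz : z ∈ cdLoop n) :
    EqUpToSign (x * y * z) (x * (y * z)) := by
  obtain ⟨i, hi, hxi⟩ := hx
  obtain ⟨j, hj, hyj⟩ := hy
  obtain ⟨k, hk, hzk⟩ := hz
  have hxy_z := eqUpToSign_mul (Nat.xor_lt_two_pow hi hj) hk (eqUpToSign_mul hi hj hxi hyj) hzk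
  have hx_yz := eqUpToSign_mul hi (Nat.xor_lt_two_pow hj hk) hxi (eqUpToSign_mul hj hk hyj hzk)
  rw [Nat.xor_assoc] at hxy_z
  exact hxy_z.trans hx_yz.symm

theorem mul_self_eq_neg_one (hx : x ∈ cdLoop n) (h_one : x ≠ 1) (h_neg_one : x ≠ -1) :
    x * x = -1 := by
  obtain ⟨i, hi, hxi | hxi⟩ := hx <;> obtain rfl | h0 := eq_or_ne i 0
  · exact absurd (hxi.trans (cdE_zero n)) h_one
  · rw [hxi, cdE_mul_self n i hi h0]
  · exact absurd (hxi.trans (by rw [cdE_zero])) h_neg_one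
  · rw [hxi, neg_mul_neg, cdE_mul_self n i hi h0]

end cdLoop

theorem IsSubloop.eq_one_or_neg_one_mem {N : Set TT} (hN : IsSubloop N) :
    N = {1} ∨ (-1 : TT) ∈ N := by
  rcases eq_or_ne N {1} with h | h
  · exact Or.inl h
  obtain ⟨x, hx, hx_one⟩ : ∃ x ∈ N, x ≠ 1 := by
    by_contra! h'
    exact h (Set.eq_singleton_iff_nonempty_unique_mem.2 ⟨hN.2.1, h'⟩)
  by_cases hx_neg_one : x = -1
  · exact Or.inr (hx_neg_one ▸ hx)
  rw [← cdLoop.mul_self_eq_neg_one (hN.1 hx) hx_one hx_neg_one]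
  exact Or.inr (hN.2.2 x hx x hx)

theorem IsSubloop.neg_mem {N : Set TT} (hN : IsSubloop N) (h : (-1 : TT) ∈ N) {x : TT}
    (hx : x ∈ N) : -x ∈ N := by
  simpa only [neg_mul, one_mul] using hN.2.2 _ h _ hx

/-- Every subloop `N` of `T_L` is normal: for all `x, y ∈ T_L`, `x·N = N·x`,
`(x·N)·y = x·(N·y)` and `N·(x·y) = (N·x)·y`, products of sets being elementwise. -/
theorem stmt5 (N : Set TT) (hN : IsSubloop N) :
    ∀ x ∈ TL, ∀ y ∈ TL,
      (fun n => x * n) '' N = (fun n => n * x) '' N ∧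
      (fun t => t * y) '' ((fun n => x * n) '' N) =
        (fun t => x * t) '' ((fun n => n * y) '' N) ∧
      (fun n => n * (x * y)) '' N = (fun t => t * y) '' ((fun n => n * x) '' N) := by
  intro x hx y hy
  simp only [Set.image_image]
  rcases hN.eq_one_or_neg_one_mem with rfl | h_neg_one
  · simp only [Set.image_singleton, mul_one, one_mul, and_self]
  have hN_neg : ∀ n ∈ N, -n ∈ N := fun n hn => hN.neg_mem h_neg_one hn
  have hN_loop : N ⊆ cdLoop 5 := TL_eq_cdLoop ▸ hN.1
  rw [TL_eq_cdLoop] at hx hy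
  refine ⟨?_, ?_, ?_⟩
  · exact Set.image_eq_image_of_eqUpToSign hN_neg (fun n => mul_neg x n) (fun n => neg_mul n x)
      fun n hn => cdLoop.eqUpToSign_mul_comm hx (hN_loop hn)
  · exact Set.image_eq_image_of_eqUpToSign hN_neg (fun n => by simp only [mul_neg, neg_mul])
      (fun n => by simp only [mul_neg, neg_mul])
      fun n hn => cdLoop.eqUpToSign_mul_assoc hx (hN_loop hn) hy
  · exact Set.image_eq_image_of_eqUpToSign hN_neg (fun n => neg_mul n (x * y))
      (fun n => by simp only [neg_mul])
      fun n hn => (cdLoop.eqUpToSign_mul_assoc (hN_loop hn) hx hy).symm
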